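/- Extreme points of K_n: a matrix S is an extreme point of the convex set K_n = {S real symmetric of order 2n : 2S - iJ ≥ 0} if and only if S = ½LᵀL for some L ∈ Sp(2n,ℝ). -/

import Mathlib

open Matrix
open scoped ComplexOrder

noncomputable section

/-- The standard symplectic form matrix J = [[0, -I],[I, 0]] of order 2n. -/
def sympJ (n : ℕ) : Matrix (Fin n ⊕ Fin n) (Fin n ⊕ Fin n) ℝ :=
  Matrix.fromBlocks 0 (-1) 1 0

/-- A real 2n×2n matrix L is symplectic if Lᵀ J L = J. -/
def IsSymplectic {n : ℕ} (L : Matrix (Fin n ⊕ Fin n) (Fin n ⊕ Fin n) ℝ) : Prop :=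
  Lᵀ * sympJ n * L = sympJ n

/-- The convex set K_n of Gaussian covariance matrices:
real symmetric S of order 2n with 2S - iJ positive semidefinite (as a complex matrix). -/
def Kset (n : ℕ) : Set (Matrix (Fin n ⊕ Fin n) (Fin n ⊕ Fin n) ℝ) :=
  {S | S.IsSymm ∧
    ((2 : ℂ) • S.map (Complex.ofReal) - Complex.I • (sympJ n).map (Complex.ofReal)).PosSemidef}

/-!
Write `D(S) = 2S - iJ` (`uncertaintyMatrix`), so that `K_n = {S symmetric : D(S) ≥ 0}`.
Congruence by a symplectic `L` maps `K_n` onto itself, since `D(LᵀSL) = Lᴴ D(S) L`, and the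
vacuum `½·1` is an extreme point: if it is the midpoint of `S₁, S₂ ∈ K_n`, the positive matrices
`D(S₁), D(S₂)` add up to `2(1 - iJ)`, which vanishes on the range of `1 + iJ`, and the real part
of `D(S₁)(1 + iJ) = 0` reads `2S₁ = 1`. Hence every `½LᵀL` is extreme.

Conversely, every `S ∈ K_n` is positive definite: for real `x`, `x* D(S) x = 2xᵀSx`, and if this
vanishes then `D(S)x = 0`, whose imaginary part is `Jx = 0`. With `A = 2S`, the matrices
`P = A - iJ` and `Q = Pᵀ = A + iJ` are positive with `P + Q = 2A`, and `P(2A)⁻¹Q = ½X` is real,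
where `X = A + JA⁻¹J`. Both `P ± P(2A)⁻¹Q` are positive, i.e. `S ± ¼X ∈ K_n`, so extremality
forces `X = 0`, that is `AJA = J`; then `√A` is symplectic and `S = ½ (√A)ᵀ √A`.
-/

open Complex (I)
open scoped MatrixOrder

section Complexify

variable {ι : Type*} [Fintype ι]

lemma ofReal_dotProduct (x y : ι → ℝ) :
    (fun i => (x i : ℂ)) ⬝ᵥ (fun i => (y i : ℂ)) = ((x ⬝ᵥ y : ℝ) : ℂ) :=
  (Complex.ofRealHom.map_dotProduct x y).symm

variable [DecidableEq ι]

def complexify : Matrix ι ι ℝ →ₐ[ℝ] Matrix ι ι ℂ :=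
  Complex.ofRealAm.mapMatrix

lemma complexify_transpose (M : Matrix ι ι ℝ) : complexify Mᵀ = (complexify M)ᵀ :=
  rfl

lemma conjTranspose_complexify (M : Matrix ι ι ℝ) : (complexify M)ᴴ = complexify Mᵀ := by
  ext
  simp [complexify]

lemma posSemidef_complexify {M : Matrix ι ι ℝ} (hM : M.PosSemidef) :
    (complexify M).PosSemidef := by
  obtain ⟨B, rfl⟩ := CStarAlgebra.nonneg_iff_eq_star_mul_self.mp hM.nonneg
  rw [star_eq_conjTranspose, conjTranspose_eq_transpose_of_trivial, map_mul,
    ← conjTranspose_complexify]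
  exact posSemidef_conjTranspose_mul_self _

lemma complexify_mulVec (M : Matrix ι ι ℝ) (x : ι → ℝ) :
    complexify M *ᵥ (fun i => (x i : ℂ)) = fun i => ((M *ᵥ x) i : ℂ) :=
  funext fun i => (Complex.ofRealHom.map_mulVec M x i).symm

lemma eq_zero_of_complexify_add_I_smul_eq_zero {M N : Matrix ι ι ℝ}
    (h : complexify M + I • complexify N = 0) : M = 0 := by
  ext i j
  simpa [complexify] using congr_arg (fun X => (X i j).re) h

lemma sub_I_smul_mul_mul_add_I_smul {a b j : Matrix ι ι ℂ} (hab : a * b = 1) (hba : b * a = 1) :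
    (a - I • j) * b * (a + I • j) = a + j * b * j := by
  have hab' : a * (b * j) = j := by rw [← Matrix.mul_assoc, hab, Matrix.one_mul]
  simp only [Matrix.sub_mul, Matrix.mul_add, Matrix.smul_mul, Matrix.mul_smul, Matrix.mul_assoc,
    hba, hab', Matrix.mul_one]
  match_scalars <;> simp

end Complexify

section PosSemidef

variable {𝕜 n : Type*} [RCLike 𝕜] [Fintype n] [DecidableEq n]

lemma Matrix.PosSemidef.mul_eq_zero_of_add_mul_eq_zero {m : Type*} [Fintype m]
    {P₁ P₂ : Matrix n n 𝕜} {N : Matrix n m 𝕜}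
    (h₁ : P₁.PosSemidef) (h₂ : P₂.PosSemidef) (h : (P₁ + P₂) * N = 0) : P₁ * N = 0 := by
  have hsum : Nᴴ * P₁ * N + Nᴴ * P₂ * N = 0 := by
    rw [Matrix.mul_assoc, Matrix.mul_assoc, ← Matrix.mul_add, ← Matrix.add_mul, h, Matrix.mul_zero]
  have hN : Nᴴ * P₁ * N = 0 := ((add_eq_zero_iff_of_nonneg (h₁.conjTranspose_mul_mul_same N).nonneg
    (h₂.conjTranspose_mul_mul_same N).nonneg).mp hsum).1
  obtain ⟨B, rfl⟩ := CStarAlgebra.nonneg_iff_eq_star_mul_self.mp h₁.nonneg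
  rw [star_eq_conjTranspose] at hN ⊢
  have hBN : B * N = 0 := by
    rw [← conjTranspose_mul_self_eq_zero, conjTranspose_mul, ← hN]
    simp only [Matrix.mul_assoc]
  rw [Matrix.mul_assoc, hBN, Matrix.mul_zero]

section Perturbation

variable {P Q W : Matrix n n 𝕜}

lemma Matrix.PosSemidef.sub_mul_mul_of_mul_add_eq_one (hP : P.PosSemidef) (hW : W.PosSemidef)
    (h : W * (P + Q) = 1) : (P - P * W * Q).PosSemidef := by
  have hPWP : P - P * W * Q = P * W * P := by
    rw [sub_eq_iff_eq_add, ← Matrix.mul_add, Matrix.mul_assoc, h, Matrix.mul_one]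
  simpa [hPWP, hP.1.eq] using hW.conjTranspose_mul_mul_same P

lemma Matrix.PosSemidef.mul_mul_of_mul_add_eq_one (hP : P.PosSemidef) (hQ : Q.PosSemidef)
    (hW : W.PosSemidef) (h : W * (P + Q) = 1) : (P * W * Q).PosSemidef := by
  have h' : (P + Q) * W = 1 := by
    simpa [hP.1.eq, hQ.1.eq, hW.1.eq] using congr_arg (·ᴴ) h
  have hcomm : Q * W * P = P * W * Q := by
    have e1 : P * W * P + P * W * Q = P := by
      rw [← Matrix.mul_add, Matrix.mul_assoc, h, Matrix.mul_one]
    have e2 : P * W * P + Q * W * P = P := by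
      rw [← Matrix.add_mul, ← Matrix.add_mul, h', Matrix.one_mul]
    exact add_left_cancel (e2.trans e1.symm)
  -- `P W Q = P W Q W (P + Q)` splits into congruences of the positive `W Q W` and `W P W`
  have hsum : P * W * Q = P * (W * Q * W) * P + Q * (W * P * W) * Q := by
    calc P * W * Q = P * W * Q * (W * (P + Q)) := by rw [h, Matrix.mul_one]
      _ = (P * W * Q) * W * P + (Q * W * P) * W * Q := by rw [hcomm]; noncomm_ring
      _ = _ := by noncomm_ring
  rw [hsum]
  refine .add ?_ ?_
  · simpa [hP.1.eq, hW.1.eq, Matrix.mul_assoc] using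
      (hQ.conjTranspose_mul_mul_same W).conjTranspose_mul_mul_same P
  · simpa [hQ.1.eq, hW.1.eq, Matrix.mul_assoc] using
      (hP.conjTranspose_mul_mul_same W).conjTranspose_mul_mul_same Q

lemma Matrix.PosSemidef.add_mul_mul_of_mul_add_eq_one (hP : P.PosSemidef) (hQ : Q.PosSemidef)
    (hW : W.PosSemidef) (h : W * (P + Q) = 1) : (P + P * W * Q).PosSemidef := by
  have hPWQ := hP.mul_mul_of_mul_add_eq_one hQ hW h
  simpa using ((hP.sub_mul_mul_of_mul_add_eq_one hW h).add hPWQ).add hPWQ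

end Perturbation

lemma Matrix.PosSemidef.sqrt_mul_mul_sqrt_eq_of_mul_mul_eq {A U : Matrix n n 𝕜}
    (hA : A.PosSemidef) (hU : Uᴴ * U = 1) (h : A * U * A = U) :
    CFC.sqrt A * U * CFC.sqrt A = U := by
  have hUU : U * Uᴴ = 1 := mul_eq_one_comm.mp hU
  have hAinv : A * (U * A * Uᴴ) = 1 := by
    rw [← Matrix.mul_assoc, ← Matrix.mul_assoc, h, hUU]
  set R := CFC.sqrt A
  have hR : R.PosSemidef := (CFC.sqrt_nonneg A).posSemidef
  have hRR : R * R = A := CFC.sqrt_mul_sqrt_self A hA.nonneg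
  -- `U R Uᴴ` is a positive square root of `U A Uᴴ = A⁻¹`, hence equals `R⁻¹`
  have hURU : U * R * Uᴴ = R⁻¹ := by
    rw [hA.inv_sqrt, inv_eq_right_inv hAinv]
    refine (CFC.sqrt_unique ?_ (hR.mul_mul_conjTranspose_same U).nonneg).symm
    rw [← hRR]
    simp only [Matrix.mul_assoc]
    rw [← Matrix.mul_assoc Uᴴ U, hU, Matrix.one_mul]
  have hRinv : R * R⁻¹ = 1 := by
    have hRX : R * (R * (U * A * Uᴴ)) = 1 := by rw [← Matrix.mul_assoc, hRR, hAinv]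
    rw [inv_eq_right_inv hRX, hRX]
  calc R * U * R = R * (U * R * Uᴴ) * U := by simp only [Matrix.mul_assoc, hU, Matrix.mul_one]
    _ = U := by rw [hURU, hRinv, Matrix.one_mul]

end PosSemidef

section Kset

variable {n : ℕ}

local notation "𝕄" => Matrix (Fin n ⊕ Fin n) (Fin n ⊕ Fin n) ℝ

lemma sympJ_transpose : (sympJ n)ᵀ = -sympJ n :=
  J_transpose _ _

lemma sympJ_mul_self : sympJ n * sympJ n = -1 :=
  J_squared _ _

lemma dotProduct_sympJ_mulVec_self (x : Fin n ⊕ Fin n → ℝ) : x ⬝ᵥ sympJ n *ᵥ x = 0 := by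
  have h := dotProduct_mulVec x (sympJ n) x
  rw [← mulVec_transpose, sympJ_transpose, neg_mulVec, neg_dotProduct,
    dotProduct_comm (sympJ n *ᵥ x)] at h
  linarith

lemma isSymplectic_iff_mem_symplecticGroup {L : 𝕄} :
    IsSymplectic L ↔ L ∈ symplecticGroup (Fin n) ℝ :=
  SymplecticGroup.mem_iff'.symm

lemma complexify_sympJ_mul_self : complexify (sympJ n) * complexify (sympJ n) = -1 := by
  rw [← map_mul, sympJ_mul_self, map_neg, map_one]

lemma conjTranspose_complexify_sympJ : (complexify (sympJ n))ᴴ = -complexify (sympJ n) := by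
  rw [conjTranspose_complexify, sympJ_transpose, map_neg]

def uncertaintyMatrix (S : 𝕄) : Matrix (Fin n ⊕ Fin n) (Fin n ⊕ Fin n) ℂ :=
  complexify ((2 : ℝ) • S) - I • complexify (sympJ n)

lemma mem_Kset_iff {S : 𝕄} : S ∈ Kset n ↔ S.IsSymm ∧ (uncertaintyMatrix S).PosSemidef := by
  rw [uncertaintyMatrix, map_smul, ← Complex.coe_smul]
  rfl

lemma uncertaintyMatrix_transpose_mul_mul {L : 𝕄} (hL : IsSymplectic L) (S : 𝕄) :
    uncertaintyMatrix (Lᵀ * S * L) = (complexify L)ᴴ * uncertaintyMatrix S * complexify L := by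
  conv_lhs => rw [uncertaintyMatrix, ← hL]
  simp only [uncertaintyMatrix, Matrix.mul_smul, Matrix.smul_mul, map_mul, map_smul,
    conjTranspose_complexify, complexify_transpose, Matrix.mul_sub, Matrix.sub_mul]

lemma transpose_mul_mul_mem_Kset {L S : 𝕄} (hL : IsSymplectic L) (hS : S ∈ Kset n) :
    Lᵀ * S * L ∈ Kset n := by
  rw [mem_Kset_iff] at hS ⊢
  refine ⟨?_, ?_⟩
  · simp [IsSymm, Matrix.transpose_mul, hS.1.eq, Matrix.mul_assoc]
  · rw [uncertaintyMatrix_transpose_mul_mul hL]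
    exact hS.2.conjTranspose_mul_mul_same _

lemma uncertaintyMatrix_half_smul_one :
    uncertaintyMatrix ((1 / 2 : ℝ) • 1 : 𝕄) = 1 - I • complexify (sympJ n) := by
  rw [uncertaintyMatrix, smul_smul]
  norm_num

lemma one_sub_I_smul_mul_one_add_I_smul :
    (1 - I • complexify (sympJ n)) * (1 + I • complexify (sympJ n)) = 0 := by
  simp only [Matrix.sub_mul, Matrix.mul_add, Matrix.one_mul, Matrix.mul_one, Matrix.smul_mul,
    Matrix.mul_smul, complexify_sympJ_mul_self]
  match_scalars <;> simp

lemma half_smul_one_mem_Kset : ((1 / 2 : ℝ) • 1 : 𝕄) ∈ Kset n := by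
  rw [mem_Kset_iff, uncertaintyMatrix_half_smul_one]
  refine ⟨isSymm_one.smul _, ?_⟩
  set E := 1 - I • complexify (sympJ n)
  have hE : Eᴴ = E := by
    simp [E, conjTranspose_complexify_sympJ]
  have hEE : E = (1 / 2 : ℝ) • (Eᴴ * E) := by
    rw [hE]
    simp only [E, Matrix.sub_mul, Matrix.mul_sub, Matrix.smul_mul, Matrix.mul_smul,
      Matrix.one_mul, Matrix.mul_one, complexify_sympJ_mul_self]
    match_scalars <;> simp [Complex.ext_iff] <;> norm_num
  rw [hEE]
  exact (posSemidef_conjTranspose_mul_self E).smul (by norm_num)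

lemma eq_half_smul_one_of_midpoint {S₁ S₂ : 𝕄}
    (h₁ : S₁ ∈ Kset n) (h₂ : S₂ ∈ Kset n) (h : (1 / 2 : ℝ) • (S₁ + S₂) = (1 / 2 : ℝ) • 1) :
    S₁ = (1 / 2 : ℝ) • 1 := by
  have hsum : S₁ + S₂ = 1 := smul_right_injective _ (by norm_num) h
  have hker :
      (uncertaintyMatrix S₁ + uncertaintyMatrix S₂) * (1 + I • complexify (sympJ n)) = 0 := by
    have : uncertaintyMatrix S₁ + uncertaintyMatrix S₂ =
        (2 : ℂ) • (1 - I • complexify (sympJ n)) := by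
      rw [uncertaintyMatrix, uncertaintyMatrix, sub_add_sub_comm, ← map_add, ← smul_add, hsum,
        map_smul, map_one]
      module
    rw [this, Matrix.smul_mul, one_sub_I_smul_mul_one_add_I_smul, smul_zero]
  have hS₁ := (mem_Kset_iff.mp h₁).2.mul_eq_zero_of_add_mul_eq_zero (mem_Kset_iff.mp h₂).2 hker
  have hre : complexify ((2 : ℝ) • S₁ - 1) +
      I • complexify ((2 : ℝ) • S₁ * sympJ n - sympJ n) = 0 := by
    rw [← hS₁, uncertaintyMatrix]
    simp only [map_sub, map_mul, map_smul, map_one, Matrix.sub_mul, Matrix.mul_add,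
      Matrix.smul_mul, Matrix.mul_smul, Matrix.mul_one, complexify_sympJ_mul_self]
    match_scalars <;> simp
  rw [← sub_eq_zero.mp (eq_zero_of_complexify_add_I_smul_eq_zero hre), smul_smul]
  norm_num

lemma eq_of_midpoint_eq_half_smul_transpose_mul_self {L S₁ S₂ : 𝕄} (hL : IsSymplectic L)
    (h₁ : S₁ ∈ Kset n) (h₂ : S₂ ∈ Kset n) (h : (1 / 2 : ℝ) • (Lᵀ * L) = (1 / 2 : ℝ) • (S₁ + S₂)) :
    S₁ = (1 / 2 : ℝ) • (Lᵀ * L) := by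
  let g : symplecticGroup (Fin n) ℝ := ⟨L, isSymplectic_iff_mem_symplecticGroup.mp hL⟩
  set M : 𝕄 := ↑g⁻¹
  have hM : IsSymplectic M := isSymplectic_iff_mem_symplecticGroup.mpr g⁻¹.2
  have hML : M * L = 1 := congr_arg Subtype.val (inv_mul_cancel g)
  have hLM : L * M = 1 := mul_eq_one_comm.mp hML
  have hmid : (1 / 2 : ℝ) • (Mᵀ * S₁ * M + Mᵀ * S₂ * M) = (1 / 2 : ℝ) • 1 := by
    rw [← Matrix.add_mul, ← Matrix.mul_add, ← Matrix.smul_mul, ← Matrix.mul_smul, ← h,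
      Matrix.mul_smul, Matrix.smul_mul, ← Matrix.mul_assoc, Matrix.mul_assoc _ L,
      ← Matrix.transpose_mul, hLM, Matrix.transpose_one, Matrix.one_mul]
  have hvac := eq_half_smul_one_of_midpoint (transpose_mul_mul_mem_Kset hM h₁)
    (transpose_mul_mul_mem_Kset hM h₂) hmid
  calc S₁ = (M * L)ᵀ * S₁ * (M * L) := by rw [hML]; simp
    _ = Lᵀ * (Mᵀ * S₁ * M) * L := by rw [Matrix.transpose_mul]; noncomm_ring
    _ = (1 / 2 : ℝ) • (Lᵀ * L) := by rw [hvac]; simp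

lemma posDef_of_mem_Kset {S : 𝕄} (hS : S ∈ Kset n) : S.PosDef := by
  rw [mem_Kset_iff] at hS
  refine .of_dotProduct_mulVec_pos (isHermitian_iff_isSymm.mpr hS.1) fun x hx => ?_
  set z : Fin n ⊕ Fin n → ℂ := fun i => (x i : ℂ)
  have hDz : uncertaintyMatrix S *ᵥ z =
      (fun i => ((((2 : ℝ) • S) *ᵥ x) i : ℂ)) - I • fun i => ((sympJ n *ᵥ x) i : ℂ) := by
    rw [uncertaintyMatrix, sub_mulVec, smul_mulVec, complexify_mulVec, complexify_mulVec]
  have hquad : star z ⬝ᵥ uncertaintyMatrix S *ᵥ z = ((x ⬝ᵥ ((2 : ℝ) • S) *ᵥ x : ℝ) : ℂ) := by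
    have hz : star z = z := funext fun i => Complex.conj_ofReal _
    rw [hz, hDz, dotProduct_sub, dotProduct_smul, ofReal_dotProduct, ofReal_dotProduct,
      dotProduct_sympJ_mulVec_self]
    simp
  have hpos : 0 ≤ x ⬝ᵥ S *ᵥ x := by
    have := hS.2.dotProduct_mulVec_nonneg z
    rw [hquad, Complex.zero_le_real, smul_mulVec, dotProduct_smul, smul_eq_mul] at this
    linarith
  refine (star_trivial x).symm ▸ hpos.lt_of_ne fun h0 => hx ?_
  have hker : uncertaintyMatrix S *ᵥ z = 0 :=
    (hS.2.dotProduct_mulVec_zero_iff z).mp (by rw [hquad, smul_mulVec, dotProduct_smul, ← h0]; simp)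
  have hJx : sympJ n *ᵥ x = 0 := funext fun i => by
    simpa [hDz] using congr_arg (fun v => (v i).im) hker
  calc x = -(sympJ n * sympJ n) *ᵥ x := by rw [sympJ_mul_self, neg_neg, one_mulVec]
    _ = 0 := by rw [neg_mulVec, ← mulVec_mulVec, hJx, mulVec_zero, neg_zero]

lemma uncertaintyMatrix_add_smul (S X : 𝕄) (c : ℝ) :
    uncertaintyMatrix (S + c • X) = uncertaintyMatrix S + (2 * c) • complexify X := by
  simp only [uncertaintyMatrix, smul_add, smul_smul, map_add, map_smul]
  abel

lemma transpose_uncertaintyMatrix {S : 𝕄} (hS : S.IsSymm) :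
    (uncertaintyMatrix S)ᵀ = complexify ((2 : ℝ) • S) + I • complexify (sympJ n) := by
  rw [uncertaintyMatrix, transpose_sub, transpose_smul, ← complexify_transpose,
    ← complexify_transpose, transpose_smul, hS.eq, sympJ_transpose, map_neg, smul_neg,
    sub_neg_eq_add]

lemma add_and_sub_quarter_smul_mem_Kset {S : 𝕄} (hS : S ∈ Kset n) :
    let X := (2 : ℝ) • S + sympJ n * ((2 : ℝ) • S)⁻¹ * sympJ n
    S + (1 / 4 : ℝ) • X ∈ Kset n ∧ S - (1 / 4 : ℝ) • X ∈ Kset n := by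
  intro X
  set A := (2 : ℝ) • S
  have hA : A.PosDef := (posDef_of_mem_Kset hS).smul (by norm_num)
  have hAA : A⁻¹ * A = 1 := nonsing_inv_mul _ ((isUnit_iff_isUnit_det A).mp hA.isUnit)
  rw [mem_Kset_iff] at hS
  set W := (1 / 2 : ℝ) • complexify A⁻¹
  have hW : W.PosSemidef := (posSemidef_complexify hA.inv.posSemidef).smul (by norm_num)
  have hWPQ : W * (uncertaintyMatrix S + (uncertaintyMatrix S)ᵀ) = 1 := by
    rw [transpose_uncertaintyMatrix hS.1, uncertaintyMatrix, sub_add_add_cancel, ← two_smul ℝ,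
      Matrix.mul_smul, Matrix.smul_mul, ← map_mul, hAA, map_one, smul_smul]
    norm_num
  have hPWQ : uncertaintyMatrix S * W * (uncertaintyMatrix S)ᵀ = (1 / 2 : ℝ) • complexify X := by
    rw [transpose_uncertaintyMatrix hS.1, uncertaintyMatrix, Matrix.mul_smul, Matrix.smul_mul,
      sub_I_smul_mul_mul_add_I_smul (by rw [← map_mul, mul_eq_one_comm.mp hAA, map_one])
        (by rw [← map_mul, hAA, map_one])]
    simp only [X, A, map_add, map_mul]
  have hX : X.IsSymm := by
    simp [X, IsSymm, transpose_nonsing_inv, hS.1.eq, sympJ_transpose, Matrix.mul_assoc]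
  refine ⟨mem_Kset_iff.mpr ⟨hS.1.add (hX.smul _), ?_⟩,
    mem_Kset_iff.mpr ⟨hS.1.sub (hX.smul _), ?_⟩⟩
  · rw [uncertaintyMatrix_add_smul, show 2 * (1 / 4 : ℝ) = 1 / 2 by norm_num, ← hPWQ]
    exact hS.2.add_mul_mul_of_mul_add_eq_one hS.2.transpose hW hWPQ
  · rw [sub_eq_add_neg, ← neg_smul, uncertaintyMatrix_add_smul,
      show 2 * -(1 / 4 : ℝ) = -(1 / 2) by norm_num, neg_smul, ← sub_eq_add_neg, ← hPWQ]
    exact hS.2.sub_mul_mul_of_mul_add_eq_one hW hWPQ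

lemma mul_sympJ_mul_eq_sympJ_of_extreme {S : 𝕄}
    (hS : S ∈ Kset n) (hext : ∀ S₁ S₂ : 𝕄,
      S₁ ∈ Kset n → S₂ ∈ Kset n → S = (1 / 2 : ℝ) • (S₁ + S₂) → S₁ = S ∧ S₂ = S) :
    (2 : ℝ) • S * sympJ n * ((2 : ℝ) • S) = sympJ n := by
  obtain ⟨hadd, hsub⟩ := add_and_sub_quarter_smul_mem_Kset hS
  set A := (2 : ℝ) • S
  have hX : A + sympJ n * A⁻¹ * sympJ n = 0 := by
    have h := (hext _ _ hadd hsub (by module)).1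
    rwa [add_eq_left, smul_eq_zero_iff_right (by norm_num)] at h
  have hAA : A * A⁻¹ = 1 :=
    mul_nonsing_inv _ ((isUnit_iff_isUnit_det A).mp ((posDef_of_mem_Kset hS).smul two_pos).isUnit)
  have hA : A = -(sympJ n * A⁻¹ * sympJ n) := eq_neg_of_add_eq_zero_left hX
  calc A * sympJ n * A = A * sympJ n * -(sympJ n * A⁻¹ * sympJ n) := by rw [← hA]
    _ = -(A * (sympJ n * sympJ n) * A⁻¹ * sympJ n) := by noncomm_ring
    _ = sympJ n := by simp [sympJ_mul_self, hAA]

lemma exists_isSymplectic_of_extreme {S : 𝕄}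
    (hS : S ∈ Kset n) (hext : ∀ S₁ S₂ : 𝕄,
      S₁ ∈ Kset n → S₂ ∈ Kset n → S = (1 / 2 : ℝ) • (S₁ + S₂) → S₁ = S ∧ S₂ = S) :
    ∃ L : 𝕄, IsSymplectic L ∧ S = (1 / 2 : ℝ) • (Lᵀ * L) := by
  set A := (2 : ℝ) • S
  have hA : A.PosSemidef := ((posDef_of_mem_Kset hS).smul (by norm_num)).posSemidef
  have hsqrt : (CFC.sqrt A)ᵀ = CFC.sqrt A := by
    rw [← conjTranspose_eq_transpose_of_trivial]
    exact (CFC.sqrt_nonneg A).posSemidef.1.eq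
  refine ⟨CFC.sqrt A, ?_, ?_⟩
  · rw [IsSymplectic, hsqrt]
    refine hA.sqrt_mul_mul_sqrt_eq_of_mul_mul_eq ?_ (mul_sympJ_mul_eq_sympJ_of_extreme hS hext)
    rw [conjTranspose_eq_transpose_of_trivial, sympJ_transpose, neg_mul, sympJ_mul_self, neg_neg]
  · rw [hsqrt, CFC.sqrt_mul_sqrt_self A hA.nonneg, smul_smul]
    norm_num

end Kset

theorem extreme_points_of_Kset (n : ℕ)
    (S : Matrix (Fin n ⊕ Fin n) (Fin n ⊕ Fin n) ℝ) :
    (S ∈ Kset n ∧ ∀ S₁ S₂ : Matrix (Fin n ⊕ Fin n) (Fin n ⊕ Fin n) ℝ,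
        S₁ ∈ Kset n → S₂ ∈ Kset n → S = (1 / 2 : ℝ) • (S₁ + S₂) → S₁ = S ∧ S₂ = S) ↔
      ∃ L : Matrix (Fin n ⊕ Fin n) (Fin n ⊕ Fin n) ℝ,
        IsSymplectic L ∧ S = (1 / 2 : ℝ) • (Lᵀ * L) := by
  constructor
  · rintro ⟨hS, hext⟩
    exact exists_isSymplectic_of_extreme hS hext
  · rintro ⟨L, hL, rfl⟩
    refine ⟨?_, fun S₁ S₂ h₁ h₂ h => ⟨?_, ?_⟩⟩
    · simpa using transpose_mul_mul_mem_Kset hL half_smul_one_mem_Kset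
    · exact eq_of_midpoint_eq_half_smul_transpose_mul_self hL h₁ h₂ h
    · exact eq_of_midpoint_eq_half_smul_transpose_mul_self hL h₂ h₁ (by rw [h, add_comm])
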